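/- arXiv:2101.04991 — 2 statements merged into one kernel-verified Lean document; each statement's English description precedes it below -/
import Mathlib

section
/- The third order mock theta function ρ satisfies ρ(q) = ₁φ₁(q²; q; q²; −q), i.e., Σ_{n≥0} q^{n²}/(q;q²)_n = Σ_{n≥0} (q²;q²)_n/((q;q²)_n (q²;q²)_n) · (−q)^n · (−1)^n q^{n(n−1)} for |q|<1. -/
open Complex

/-- The q-Pochhammer symbol `(a;q)_n = ∏_{j=0}^{n-1} (1 - a q^j)`. -/
noncomputable def qPoch (a q : ℂ) (n : ℕ) : ℂ := ∏ j ∈ Finset.range n, (1 - a * q ^ j)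

theorem qPoch_ne_zero {a q : ℂ} (ha : ‖a‖ < 1) (hq : ‖q‖ ≤ 1) (n : ℕ) : qPoch a q n ≠ 0 := by
  refine Finset.prod_ne_zero_iff.mpr fun j _ => sub_ne_zero.mpr fun h => ?_
  have hlt : ‖a * q ^ j‖ < 1 :=
    calc ‖a * q ^ j‖ = ‖a‖ * ‖q‖ ^ j := by rw [norm_mul, norm_pow]
      _ ≤ ‖a‖ := mul_le_of_le_one_right (norm_nonneg a) (pow_le_one₀ (norm_nonneg q) hq)
      _ < 1 := ha
  simp [← h] at hlt

theorem pow_add_mul_sub_one {M : Type*} [Monoid M] (x : M) (n : ℕ) :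
    x ^ n * x ^ (n * (n - 1)) = x ^ (n ^ 2) := by
  rw [← pow_add]
  congr 1
  cases n <;> simp [sq, Nat.mul_succ, Nat.add_comm]

theorem rho_eq_onePhiOne_general (q : ℂ) (hq1 : ‖q‖ < 1) :
    ∑' n : ℕ, q ^ (n ^ 2) / qPoch q (q ^ 2) n
      = ∑' n : ℕ, qPoch (q ^ 2) (q ^ 2) n /
          (qPoch q (q ^ 2) n * qPoch (q ^ 2) (q ^ 2) n) *
          (-q) ^ n * (-1 : ℂ) ^ n * q ^ (n * (n - 1)) := by
  -- the two series agree term by term: `(q²;q²)_n` cancels and the signs pair off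
  refine tsum_congr fun n => ?_
  have hq2 : ‖q ^ 2‖ < 1 := by rw [norm_pow]; exact pow_lt_one₀ (norm_nonneg q) hq1 two_ne_zero
  rw [div_mul_cancel_right₀ (qPoch_ne_zero hq2 hq2.le n), mul_assoc _ ((-q) ^ n),
    ← mul_pow, neg_mul_neg, mul_one, mul_assoc, pow_add_mul_sub_one, inv_mul_eq_div]

/-- `ρ(q) = ₁φ₁(q²; q; q²; −q)`. -/
theorem rho_eq_onePhiOne (q : ℂ) (hq0 : 0 < ‖q‖) (hq1 : ‖q‖ < 1) :
    ∑' n : ℕ, q ^ (n ^ 2) / qPoch q (q ^ 2) n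
      = ∑' n : ℕ, qPoch (q ^ 2) (q ^ 2) n /
          (qPoch q (q ^ 2) n * qPoch (q ^ 2) (q ^ 2) n) *
          (-q) ^ n * (-1 : ℂ) ^ n * q ^ (n * (n - 1)) :=
  rho_eq_onePhiOne_general q hq1
end

section
/- Fine's symmetry transformation: F(a,b;t;q) = (1−b)/(1−t) · F(at/b, t; b; q) for |q|<1 and suitable parameters, where F(a,b;t;q) = Σ_{n≥0} (aq;q)_n/(bq;q)_n · t^n. -/
open Complex

/-- Fine's function `F(a,b;t;q) = Σ_{n≥0} (aq;q)_n/(bq;q)_n · t^n`. -/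
noncomputable def fineF (a b t q : ℂ) : ℂ :=
  ∑' n : ℕ, qPoch (a * q) q n / qPoch (b * q) q n * t ^ n

/-!
Fine's function satisfies the contiguous relation
`(1 - t) F(a,b;t) = (1 - b) + (b - atq) F(a,b;tq)`. Iterating it along `t, tq, tq², …` writes
`(1 - t) F(a,b;t)` as `1 - b` times the `N`-th partial sum of `F(at/b,t;b)` plus a remainder
which is the `N`-th term of that same convergent series times a uniformly bounded factor, so it
tends to zero. Every series involved converges by the ratio test: the coefficient ratio
`(1 - aq^{n+1}) / (1 - bq^{n+1})` tends to `1`.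
-/

open Filter Topology

theorem summable_norm_of_succ_eq_mul {𝕜 : Type*} [NormedDivisionRing 𝕜] {f g : ℕ → 𝕜} {l : 𝕜}
    (hl : ‖l‖ < 1) (hg : Tendsto g atTop (𝓝 l)) (hfg : ∀ n, f (n + 1) = g n * f n) :
    Summable fun n => ‖f n‖ := by
  obtain ⟨r, hlr, hr1⟩ := exists_between hl
  refine summable_of_ratio_norm_eventually_le hr1 ?_
  filter_upwards [hg.norm.eventually (gt_mem_nhds hlr)] with n hn
  rw [norm_norm, norm_norm, hfg, norm_mul]
  exact mul_le_mul_of_nonneg_right hn.le (norm_nonneg _)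

theorem qPoch_zero (a q : ℂ) : qPoch a q 0 = 1 := Finset.prod_range_zero _

theorem qPoch_succ (a q : ℂ) (n : ℕ) : qPoch a q (n + 1) = qPoch a q n * (1 - a * q ^ n) :=
  Finset.prod_range_succ _ n

noncomputable def fineCoeff (a b q : ℂ) (n : ℕ) : ℂ := qPoch (a * q) q n / qPoch (b * q) q n

theorem fineCoeff_zero (a b q : ℂ) : fineCoeff a b q 0 = 1 := by
  simp [fineCoeff, qPoch_zero]

theorem fineCoeff_succ (a b q : ℂ) (n : ℕ) :
    fineCoeff a b q (n + 1) =
      (1 - a * q ^ (n + 1)) / (1 - b * q ^ (n + 1)) * fineCoeff a b q n := by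
  simp only [fineCoeff, qPoch_succ, mul_assoc, ← pow_succ', mul_div_mul_comm, mul_comm]

theorem one_sub_mul_fineCoeff_succ {a b q : ℂ} {n : ℕ} (h : b * q ^ (n + 1) ≠ 1) :
    (1 - b * q ^ (n + 1)) * fineCoeff a b q (n + 1) =
      (1 - a * q ^ (n + 1)) * fineCoeff a b q n := by
  rw [fineCoeff_succ, ← mul_assoc, mul_div_cancel₀ _ (sub_ne_zero.mpr h.symm)]

theorem summable_norm_fineCoeff_mul_pow (a b : ℂ) {q s : ℂ} (hq : ‖q‖ < 1) (hs : ‖s‖ < 1) :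
    Summable fun n => ‖fineCoeff a b q n * s ^ n‖ := by
  have hpow : Tendsto (fun n : ℕ => q ^ (n + 1)) atTop (𝓝 0) :=
    (tendsto_pow_atTop_nhds_zero_of_norm_lt_one hq).comp (tendsto_add_atTop_nat 1)
  have hratio : Tendsto (fun n : ℕ => (1 - a * q ^ (n + 1)) / (1 - b * q ^ (n + 1)) * s)
      atTop (𝓝 s) := by
    simpa using (((hpow.const_mul a).const_sub 1).div ((hpow.const_mul b).const_sub 1)
      (by simp)).mul_const s
  refine summable_norm_of_succ_eq_mul hs hratio fun n => ?_
  rw [fineCoeff_succ, pow_succ]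
  ring

theorem hasSum_fineF (a b : ℂ) {q s : ℂ} (hq : ‖q‖ < 1) (hs : ‖s‖ < 1) :
    HasSum (fun n => fineCoeff a b q n * s ^ n) (fineF a b s q) :=
  (summable_norm_fineCoeff_mul_pow a b hq hs).of_norm.hasSum

theorem norm_fineF_le (a b : ℂ) {q s t : ℂ} (hq : ‖q‖ < 1) (ht : ‖t‖ < 1) (hst : ‖s‖ ≤ ‖t‖) :
    ‖fineF a b s q‖ ≤ ∑' n, ‖fineCoeff a b q n * t ^ n‖ := by
  rw [← (hasSum_fineF a b hq (hst.trans_lt ht)).tsum_eq]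
  refine tsum_of_norm_bounded (summable_norm_fineCoeff_mul_pow a b hq ht).hasSum fun n => ?_
  simp only [norm_mul, norm_pow]
  gcongr

theorem one_sub_mul_fineF {a b q s : ℂ} (hq : ‖q‖ < 1) (hs : ‖s‖ < 1)
    (hb : ∀ m : ℕ, 1 ≤ m → b * q ^ m ≠ 1) :
    (1 - s) * fineF a b s q = (1 - b) + (b - a * s * q) * fineF a b (s * q) q := by
  have hsq : ‖s * q‖ < 1 := by
    rw [norm_mul]; exact mul_lt_one_of_nonneg_of_lt_one_left (norm_nonneg s) hs hq.le
  have hA := hasSum_fineF a b hq hs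
  have hB := hasSum_fineF a b hq hsq
  have hA' := (hasSum_nat_add_iff' 1).mpr hA
  have hB' := (hasSum_nat_add_iff' 1).mpr hB
  simp only [Finset.sum_range_one, fineCoeff_zero, pow_zero, mul_one] at hA' hB'
  have hterm : (fun n : ℕ => fineCoeff a b q (n + 1) * s ^ (n + 1)
        - b * (fineCoeff a b q (n + 1) * (s * q) ^ (n + 1)))
      = fun n => s * (fineCoeff a b q n * s ^ n) - a * s * q * (fineCoeff a b q n * (s * q) ^ n) :=
    funext fun n => by
      linear_combination s ^ (n + 1) * one_sub_mul_fineCoeff_succ (a := a) (hb (n + 1) n.succ_pos)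
  have h := hA'.sub (hB'.mul_left b)
  rw [hterm] at h
  linear_combination h.unique ((hA.mul_left s).sub (hB.mul_left (a * s * q)))

theorem norm_mul_pow_le {t q : ℂ} (hq : ‖q‖ ≤ 1) (N : ℕ) : ‖t * q ^ N‖ ≤ ‖t‖ := by
  rw [norm_mul, norm_pow]
  exact mul_le_of_le_one_right (norm_nonneg t) (pow_le_one₀ (norm_nonneg q) hq)

/-- The remainder after `N` steps of iterating `one_sub_mul_fineF` along `t, tq, tq², …`. -/
noncomputable def fineTail (a b t q : ℂ) (N : ℕ) : ℂ :=
  fineCoeff (a * t / b) t q N * b ^ N * ((1 - t * q ^ N) * fineF a b (t * q ^ N) q)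

theorem fineTail_zero (a b t q : ℂ) : fineTail a b t q 0 = (1 - t) * fineF a b t q := by
  simp [fineTail, fineCoeff_zero]

theorem fineTail_sub_fineTail_succ {a b t q : ℂ} (hq : ‖q‖ < 1) (ht : ‖t‖ < 1) (hb0 : b ≠ 0)
    (hb : ∀ m : ℕ, 1 ≤ m → b * q ^ m ≠ 1) (htq : ∀ m : ℕ, 1 ≤ m → t * q ^ m ≠ 1) (N : ℕ) :
    fineTail a b t q N - fineTail a b t q (N + 1) =
      (1 - b) * (fineCoeff (a * t / b) t q N * b ^ N) := by
  have hrel := one_sub_mul_fineF (a := a) hq ((norm_mul_pow_le hq.le N).trans_lt ht) hb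
  have hrec := one_sub_mul_fineCoeff_succ (a := a * t / b) (htq (N + 1) N.succ_pos)
  rw [mul_assoc t, ← pow_succ] at hrel
  rw [fineTail, fineTail, hrel]
  field_simp at hrec ⊢
  linear_combination -(b ^ N * fineF a b (t * q ^ (N + 1)) q) * hrec

theorem tendsto_fineTail {a b t q : ℂ} (hq : ‖q‖ < 1) (ht : ‖t‖ < 1) (hb : ‖b‖ < 1) :
    Tendsto (fineTail a b t q) atTop (𝓝 0) := by
  have hcoeff : Tendsto (fun N => fineCoeff (a * t / b) t q N * b ^ N) atTop (𝓝 0) :=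
    (summable_norm_fineCoeff_mul_pow (a * t / b) t hq hb).of_norm.tendsto_atTop_zero
  refine hcoeff.zero_mul_isBoundedUnder_le
    (isBoundedUnder_of ⟨2 * ∑' n, ‖fineCoeff a b q n * t ^ n‖, fun N => ?_⟩)
  have hsmall := norm_mul_pow_le (t := t) hq.le N
  have h2 : ‖1 - t * q ^ N‖ ≤ 2 := by
    linarith [norm_sub_le (1 : ℂ) (t * q ^ N), norm_one (α := ℂ)]
  rw [Function.comp_apply, norm_mul]
  exact mul_le_mul h2 (norm_fineF_le a b hq ht hsmall) (norm_nonneg _) zero_le_two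

theorem fine_symmetry_general (q a b t : ℂ) (hq1 : ‖q‖ < 1)
    (ht : ‖t‖ < 1) (hbnorm : ‖b‖ < 1) (hb0 : b ≠ 0) (ht1 : t ≠ 1)
    (hb : ∀ m : ℕ, 1 ≤ m → b * q ^ m ≠ 1)
    (htq : ∀ m : ℕ, 1 ≤ m → t * q ^ m ≠ 1) :
    fineF a b t q = (1 - b) / (1 - t) * fineF (a * t / b) t b q := by
  have hseries := ((hasSum_fineF (a * t / b) t hq1 hbnorm).mul_left (1 - b)).tendsto_sum_nat
  have htelescope : Tendsto
      (fun N => ∑ n ∈ Finset.range N, (1 - b) * (fineCoeff (a * t / b) t q n * b ^ n))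
      atTop (𝓝 ((1 - t) * fineF a b t q)) := by
    simp_rw [← fineTail_sub_fineTail_succ hq1 ht hb0 hb htq, Finset.sum_range_sub', ← fineTail_zero]
    simpa using (tendsto_fineTail hq1 ht hbnorm).const_sub (fineTail a b t q 0)
  rw [div_mul_eq_mul_div, eq_div_iff (sub_ne_zero.mpr ht1.symm)]
  linear_combination tendsto_nhds_unique htelescope hseries

/-- Fine's symmetry transformation (6.3):
`F(a,b;t;q) = (1−b)/(1−t) · F(at/b, t; b; q)`. -/
theorem fine_symmetry (q a b t : ℂ) (hq0 : 0 < ‖q‖) (hq1 : ‖q‖ < 1)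
    (ht : ‖t‖ < 1) (hbnorm : ‖b‖ < 1) (hb0 : b ≠ 0) (ht1 : t ≠ 1)
    (hb : ∀ m : ℕ, 1 ≤ m → b * q ^ m ≠ 1)
    (htq : ∀ m : ℕ, 1 ≤ m → t * q ^ m ≠ 1) :
    fineF a b t q = (1 - b) / (1 - t) * fineF (a * t / b) t b q :=
  fine_symmetry_general q a b t hq1 ht hbnorm hb0 ht1 hb htq
end
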